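/- Let M and N be closed subspaces of a Hilbert space H. Then δ(M, N) = ‖(I − P_N) P_M‖, gap(M, N) = ‖P_M − P_N‖, and if gap(M, N) < 1 then gap(M, N) = δ(M, N) = δ(N, M). -/

import Mathlib

open Filter Topology Metric Submodule ContinuousLinearMap

/-- Orthogonal projection onto a subspace `K` (as an operator `H →L[ℝ] H`),
defined whenever `K` admits orthogonal projections (e.g. `K` closed). -/
noncomputable def orthProj {H : Type*} [NormedAddCommGroup H] [InnerProductSpace ℝ H]
    (K : Submodule ℝ H) : H →L[ℝ] H :=
  open scoped Classical in
  if h : HasOrthogonalProjection K then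
    haveI := h
    K.subtypeL.comp (orthogonalProjection K)
  else 0

/-- `δ(M,N) = sup {dist(x,N) : x ∈ M, ‖x‖ = 1}` (0 if `M = {0}`, as `sSup ∅ = 0` in `ℝ`). -/
noncomputable def deltaSub {H : Type*} [NormedAddCommGroup H] [InnerProductSpace ℝ H]
    (M N : Submodule ℝ H) : ℝ :=
  sSup {d : ℝ | ∃ x ∈ M, ‖x‖ = 1 ∧ d = Metric.infDist x (N : Set H)}

/-- The gap between two subspaces. -/
noncomputable def gapSub {H : Type*} [NormedAddCommGroup H] [InnerProductSpace ℝ H]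
    (M N : Submodule ℝ H) : ℝ :=
  max (deltaSub M N) (deltaSub N M)

/-!
Since `dist(x, N) = ‖P_{N⊥} x‖`, `δ(M, N)` is the norm of `P_{N⊥} P_M`. The identity
`P_M - P_N = P_{N⊥} P_M - P_N P_{M⊥}` splits `(P_M - P_N) x` into a vector of `N⊥` and one
of `N`, and `‖P_N P_{M⊥}‖ = ‖P_{M⊥} P_N‖` by taking adjoints; this gives
`gap(M, N) = ‖P_M - P_N‖`.

If `δ(M, N) < 1` and `δ(N, M) < 1`, then `P_N` restricted to `M` is bounded below and its
adjoint, `P_M` restricted to `N`, is injective, so `P_N` maps `M` onto `N`. For a unit vector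
`y = P_N x` of `N` we get `⟪P_M y, x⟫ = ‖y‖² = 1` and `‖x‖ ≤ (1 - δ(M, N)²)^{-1/2}`, hence
`‖P_M y‖² ≥ 1 - δ(M, N)²`, i.e. `dist(y, M) ≤ δ(M, N)`. By symmetry `δ(M, N) = δ(N, M)`.
-/

open RealInnerProductSpace
open scoped InnerProduct

namespace Submodule

variable {H : Type*} [NormedAddCommGroup H] [InnerProductSpace ℝ H]

lemma orthProj_eq_starProjection (K : Submodule ℝ H) [K.HasOrthogonalProjection] :
    orthProj K = K.starProjection := by
  rw [orthProj, dif_pos ‹_›]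
  rfl

lemma infDist_eq_norm_sub_starProjection (K : Submodule ℝ H) [K.HasOrthogonalProjection]
    (x : H) : infDist x K = ‖x - K.starProjection x‖ := by
  rw [infDist_eq_iInf, starProjection_minimal]
  simp only [dist_eq_norm]
  rfl

@[simp]
lemma starProjection_starProjection (K : Submodule ℝ H) [K.HasOrthogonalProjection] (x : H) :
    K.starProjection (K.starProjection x) = K.starProjection x :=
  starProjection_eq_self_iff.2 (starProjection_apply_mem K x)

end Submodule

section Delta

variable {H : Type*} [NormedAddCommGroup H] [InnerProductSpace ℝ H] (M N : Submodule ℝ H)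

lemma deltaSub_nonneg : 0 ≤ deltaSub M N :=
  Real.sSup_nonneg <| by rintro _ ⟨x, -, -, rfl⟩; exact infDist_nonneg

lemma bddAbove_deltaSub_set :
    BddAbove {d : ℝ | ∃ x ∈ M, ‖x‖ = 1 ∧ d = infDist x (N : Set H)} := by
  refine ⟨1, ?_⟩
  rintro _ ⟨x, -, hx, rfl⟩
  simpa [hx] using infDist_le_dist_of_mem (x := x) N.zero_mem

variable [N.HasOrthogonalProjection]

lemma norm_sub_starProjection_le_deltaSub {x : H} (hx : x ∈ M) :
    ‖x - N.starProjection x‖ ≤ deltaSub M N * ‖x‖ := by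
  obtain rfl | hx0 := eq_or_ne x 0
  · simp
  set u := ‖x‖⁻¹ • x
  have hu : ‖u - N.starProjection u‖ = ‖x‖⁻¹ * ‖x - N.starProjection x‖ := by
    rw [map_smul, ← smul_sub, norm_smul, norm_inv, norm_norm]
  have hu_le : ‖u - N.starProjection u‖ ≤ deltaSub M N := by
    rw [← infDist_eq_norm_sub_starProjection]
    exact le_csSup (bddAbove_deltaSub_set M N) ⟨u, M.smul_mem _ hx, norm_smul_inv_norm hx0, rfl⟩
  rw [hu, inv_mul_le_iff₀ (norm_pos_iff.2 hx0)] at hu_le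
  linarith

lemma deltaSub_eq_opNorm [M.HasOrthogonalProjection] :
    deltaSub M N = ‖Nᗮ.starProjection ∘L M.starProjection‖ := by
  apply le_antisymm
  · refine Real.sSup_le ?_ (norm_nonneg _)
    rintro _ ⟨x, hxM, hx, rfl⟩
    calc infDist x N = ‖(Nᗮ.starProjection ∘L M.starProjection) x‖ := by
          simp [infDist_eq_norm_sub_starProjection, starProjection_eq_self_iff.2 hxM]
      _ ≤ ‖Nᗮ.starProjection ∘L M.starProjection‖ := by
          simpa [hx] using (Nᗮ.starProjection ∘L M.starProjection).le_opNorm x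
  · refine opNorm_le_bound _ (deltaSub_nonneg M N) fun x => ?_
    calc ‖(Nᗮ.starProjection ∘L M.starProjection) x‖
        = ‖M.starProjection x - N.starProjection (M.starProjection x)‖ := by simp
      _ ≤ deltaSub M N * ‖M.starProjection x‖ :=
          norm_sub_starProjection_le_deltaSub M N (starProjection_apply_mem M x)
      _ ≤ deltaSub M N * ‖x‖ := by
          gcongr
          · exact deltaSub_nonneg M N
          · exact norm_starProjection_apply_le M x

lemma sqrt_one_sub_deltaSub_sq_mul_norm_le {x : H} (hx : x ∈ M) :
    √(1 - deltaSub M N ^ 2) * ‖x‖ ≤ ‖N.starProjection x‖ := by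
  have hpyth := N.norm_sq_eq_add_norm_sq_starProjection x
  have hsub : ‖Nᗮ.starProjection x‖ ≤ deltaSub M N * ‖x‖ := by
    simpa using norm_sub_starProjection_le_deltaSub M N hx
  have hsq : (1 - deltaSub M N ^ 2) * ‖x‖ ^ 2 ≤ ‖N.starProjection x‖ ^ 2 := by
    nlinarith [pow_le_pow_left₀ (norm_nonneg _) hsub 2]
  calc √(1 - deltaSub M N ^ 2) * ‖x‖ = √((1 - deltaSub M N ^ 2) * ‖x‖ ^ 2) := by
        rw [Real.sqrt_mul' _ (sq_nonneg _), Real.sqrt_sq (norm_nonneg _)]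
    _ ≤ √(‖N.starProjection x‖ ^ 2) := Real.sqrt_le_sqrt hsq
    _ = ‖N.starProjection x‖ := Real.sqrt_sq (norm_nonneg _)

end Delta

section Gap

variable {H : Type*} [NormedAddCommGroup H] [InnerProductSpace ℝ H]
  (M N : Submodule ℝ H) [M.HasOrthogonalProjection] [N.HasOrthogonalProjection]

lemma opNorm_starProjection_orthogonal_comp_le :
    ‖Nᗮ.starProjection ∘L M.starProjection‖ ≤ ‖M.starProjection - N.starProjection‖ :=
  calc ‖Nᗮ.starProjection ∘L M.starProjection‖
      = ‖(M.starProjection - N.starProjection) ∘L M.starProjection‖ := by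
        congr 1
        ext x
        simp
    _ ≤ ‖M.starProjection - N.starProjection‖ * ‖M.starProjection‖ := opNorm_comp_le _ _
    _ ≤ ‖M.starProjection - N.starProjection‖ :=
        mul_le_of_le_one_right (norm_nonneg _) (starProjection_norm_le M)

variable [CompleteSpace H]

lemma opNorm_starProjection_comp_comm :
    ‖M.starProjection ∘L N.starProjection‖ = ‖N.starProjection ∘L M.starProjection‖ := by
  rw [← LinearIsometryEquiv.norm_map adjoint, adjoint_comp,
    (isSelfAdjoint_starProjection M).adjoint_eq, (isSelfAdjoint_starProjection N).adjoint_eq]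

lemma opNorm_starProjection_sub :
    ‖M.starProjection - N.starProjection‖ =
      max ‖Nᗮ.starProjection ∘L M.starProjection‖ ‖Mᗮ.starProjection ∘L N.starProjection‖ := by
  set c := max ‖Nᗮ.starProjection ∘L M.starProjection‖ ‖Mᗮ.starProjection ∘L N.starProjection‖
  refine le_antisymm ?_ (max_le (opNorm_starProjection_orthogonal_comp_le M N) ?_)
  · refine opNorm_le_bound _ (le_max_of_le_left (norm_nonneg _)) fun x => ?_
    set u := Nᗮ.starProjection (M.starProjection x)
    set v := N.starProjection (Mᗮ.starProjection x)
    have hsplit : (M.starProjection - N.starProjection) x = u - v := by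
      simp only [u, v, sub_apply, starProjection_orthogonal_val, map_sub]
      abel
    have huv : ⟪u, v⟫ = 0 :=
      inner_left_of_mem_orthogonal (starProjection_apply_mem N _) (starProjection_apply_mem Nᗮ _)
    have hu : ‖u‖ ≤ c * ‖M.starProjection x‖ := by
      have := (Nᗮ.starProjection ∘L M.starProjection).le_opNorm (M.starProjection x)
      simp only [comp_apply, starProjection_starProjection] at this
      exact this.trans (by gcongr; exact le_max_left _ _)
    have hv : ‖v‖ ≤ c * ‖Mᗮ.starProjection x‖ := by
      have := (N.starProjection ∘L Mᗮ.starProjection).le_opNorm (Mᗮ.starProjection x)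
      rw [comp_apply, starProjection_starProjection, opNorm_starProjection_comp_comm] at this
      exact this.trans (by gcongr; exact le_max_right _ _)
    have hsq : ‖u - v‖ ^ 2 ≤ (c * ‖x‖) ^ 2 :=
      calc ‖u - v‖ ^ 2 = ‖u‖ ^ 2 + ‖v‖ ^ 2 := by
            rw [sq, norm_sub_sq_eq_norm_sq_add_norm_sq_real huv, sq, sq]
        _ ≤ (c * ‖M.starProjection x‖) ^ 2 + (c * ‖Mᗮ.starProjection x‖) ^ 2 := by gcongr
        _ = (c * ‖x‖) ^ 2 := by
            rw [mul_pow c ‖x‖, M.norm_sq_eq_add_norm_sq_starProjection x]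
            ring
    rw [hsplit]
    exact (pow_le_pow_iff_left₀ (norm_nonneg _) (by positivity) two_ne_zero).1 hsq
  · rw [norm_sub_rev]
    exact opNorm_starProjection_orthogonal_comp_le N M

end Gap

lemma ContinuousLinearMap.range_eq_top_of_antilipschitz_of_ker_adjoint_eq_bot
    {𝕜 E F : Type*} [RCLike 𝕜] [NormedAddCommGroup E] [InnerProductSpace 𝕜 E] [CompleteSpace E]
    [NormedAddCommGroup F] [InnerProductSpace 𝕜 F] [CompleteSpace F]
    {T : E →L[𝕜] F} {K : NNReal} (hT : AntilipschitzWith K T) (hker : T†.ker = ⊥) :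
    T.range = ⊤ := by
  have : CompleteSpace T.range := (hT.isClosed_range T.uniformContinuous).completeSpace_coe
  rw [← orthogonal_eq_bot_iff, orthogonal_range, hker]

section Surjective

variable {H : Type*} [NormedAddCommGroup H] [InnerProductSpace ℝ H] [CompleteSpace H]
  (M N : Submodule ℝ H) [CompleteSpace M] [CompleteSpace N]

lemma exists_mem_starProjection_eq (hMN : deltaSub M N < 1) (hNM : deltaSub N M < 1) {y : H}
    (hy : y ∈ N) : ∃ x ∈ M, N.starProjection x = y := by
  set T : M →L[ℝ] N := N.orthogonalProjectionOnto ∘L M.subtypeL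
  have hα : 0 < √(1 - deltaSub M N ^ 2) :=
    Real.sqrt_pos.2 (by nlinarith [deltaSub_nonneg M N])
  have hβ : 0 < √(1 - deltaSub N M ^ 2) :=
    Real.sqrt_pos.2 (by nlinarith [deltaSub_nonneg N M])
  have hT : AntilipschitzWith ⟨_, (inv_pos.2 hα).le⟩ T := by
    refine T.antilipschitz_of_bound fun x => ?_
    change ‖x‖ ≤ (√(1 - deltaSub M N ^ 2))⁻¹ * ‖T x‖
    rw [inv_mul_eq_div, le_div_iff₀ hα, mul_comm]
    exact sqrt_one_sub_deltaSub_sq_mul_norm_le M N x.2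
  have hker : T†.ker = ⊥ := by
    rw [adjoint_comp, M.adjoint_subtypeL, N.adjoint_orthogonalProjectionOnto, eq_bot_iff]
    intro z hz
    have hz0 : M.starProjection z = 0 := by simpa using congrArg Subtype.val hz
    have := sqrt_one_sub_deltaSub_sq_mul_norm_le N M z.2
    rw [hz0, norm_zero] at this
    simpa using nonpos_of_mul_nonpos_right this hβ
  obtain ⟨x, hx⟩ := (T.range_eq_top_of_antilipschitz_of_ker_adjoint_eq_bot hT hker).ge
    (Submodule.mem_top (x := (⟨y, hy⟩ : N)))
  exact ⟨x, x.2, congrArg Subtype.val hx⟩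

lemma deltaSub_le_of_lt_one (hMN : deltaSub M N < 1) (hNM : deltaSub N M < 1) :
    deltaSub N M ≤ deltaSub M N := by
  set α := √(1 - deltaSub M N ^ 2)
  have hα2 : α ^ 2 = 1 - deltaSub M N ^ 2 := Real.sq_sqrt (by nlinarith [deltaSub_nonneg M N])
  refine Real.sSup_le ?_ (deltaSub_nonneg M N)
  rintro _ ⟨y, hyN, hy, rfl⟩
  obtain ⟨x, hxM, hxy⟩ := exists_mem_starProjection_eq M N hMN hNM hyN
  have hx : α * ‖x‖ ≤ 1 := hy ▸ hxy ▸ sqrt_one_sub_deltaSub_sq_mul_norm_le M N hxM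
  have hinner : ⟪M.starProjection y, x⟫ = 1 :=
    calc ⟪M.starProjection y, x⟫ = ⟪N.starProjection y, x⟫ := by
          rw [inner_starProjection_left_eq_right, starProjection_eq_self_iff.2 hxM,
            starProjection_eq_self_iff.2 hyN]
      _ = ‖y‖ ^ 2 := by
          rw [inner_starProjection_left_eq_right, hxy, real_inner_self_eq_norm_sq]
      _ = 1 := by rw [hy, one_pow]
  have hα : α ≤ ‖M.starProjection y‖ := by
    have := hinner ▸ real_inner_le_norm (M.starProjection y) x
    nlinarith [norm_nonneg (M.starProjection y), Real.sqrt_nonneg (1 - deltaSub M N ^ 2)]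
  have hpyth := M.norm_sq_eq_add_norm_sq_starProjection y
  rw [hy] at hpyth
  rw [infDist_eq_norm_sub_starProjection, ← starProjection_orthogonal_val,
    ← pow_le_pow_iff_left₀ (norm_nonneg _) (deltaSub_nonneg M N) two_ne_zero]
  nlinarith [pow_le_pow_left₀ (Real.sqrt_nonneg _) hα 2]

end Surjective

/-- For closed subspaces `M, N`: `δ(M,N) = ‖(I − P_N)P_M‖`, `gap(M,N) = ‖P_M − P_N‖`,
and if `gap(M,N) < 1` then `gap(M,N) = δ(M,N) = δ(N,M)`. -/
theorem stmt13 {H : Type*} [NormedAddCommGroup H] [InnerProductSpace ℝ H] [CompleteSpace H]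
    (M N : Submodule ℝ H) (hM : IsClosed (M : Set H)) (hN : IsClosed (N : Set H)) :
    deltaSub M N = ‖(1 - orthProj N).comp (orthProj M)‖ ∧
    gapSub M N = ‖orthProj M - orthProj N‖ ∧
    (gapSub M N < 1 → gapSub M N = deltaSub M N ∧ deltaSub M N = deltaSub N M) := by
  have : CompleteSpace M := hM.completeSpace_coe
  have : CompleteSpace N := hN.completeSpace_coe
  simp only [orthProj_eq_starProjection, ← starProjection_orthogonal']
  have hgap : gapSub M N = ‖M.starProjection - N.starProjection‖ := by
    rw [gapSub, deltaSub_eq_opNorm M N, deltaSub_eq_opNorm N M, opNorm_starProjection_sub]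
  refine ⟨deltaSub_eq_opNorm M N, hgap, fun h => ?_⟩
  have hMN : deltaSub M N < 1 := (le_max_left _ _).trans_lt h
  have hNM : deltaSub N M < 1 := (le_max_right _ _).trans_lt h
  have heq : deltaSub M N = deltaSub N M :=
    (deltaSub_le_of_lt_one N M hNM hMN).antisymm (deltaSub_le_of_lt_one M N hMN hNM)
  exact ⟨by rw [gapSub, heq, max_self], heq⟩
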